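/- Let H(z) = z^m be a monomial function on ℂ_*^d (m ∈ ℤ^d). Then there exists a compact toric manifold K such that ℂ_*^d embeds into K as an open dense stratum and the function H extends from this stratum to a smooth ℙ¹-valued function on all of K. -/

import Mathlib

open Filter Topology Set Metric
open scoped Manifold
open scoped BigOperators

namespace ACSV

variable (d : ℕ)

/-- The complex torus `ℂ_*^d`, the set of points of `ℂ^d` with all coordinates nonzero. -/
def Cstar : Set (Fin d → ℂ) := {z | ∀ j, z j ≠ 0}

/-- The height (phase) function `h_r(z) = -∑_j r_j log |z_j|`. -/
noncomputable def hgt (r : Fin d → ℝ) (z : Fin d → ℂ) : ℝ :=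
  -∑ j, r j * Real.log ‖z j‖

/-- Complexification of a real vector. -/
def cx (r : Fin d → ℝ) : Fin d → ℂ := fun j => (r j : ℂ)

/-- The matrix `J(z,y)` whose first `c` rows are `z_j ∂f_i/∂z_j` and whose last row is `y`. -/
noncomputable def Jmat (c : ℕ) (f : Fin c → MvPolynomial (Fin d) ℂ)
    (z y : Fin d → ℂ) : Matrix (Fin (c+1)) (Fin d) ℂ :=
  Matrix.of fun i j =>
    Fin.lastCases (y j) (fun i' => z j * MvPolynomial.eval z (MvPolynomial.pderiv j (f i'))) i

/-- The binary stationary-point relation: `rank J(z,y) ≤ c`. -/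
noncomputable def StationaryRel (c : ℕ) (f : Fin c → MvPolynomial (Fin d) ℂ)
    (z y : Fin d → ℂ) : Prop := (Jmat d c f z y).rank ≤ c

/-- The complex tangent space at `z` of a set cut out by the polynomials `f i`
(kernel of the differentials). -/
def TangentSp (c : ℕ) (f : Fin c → MvPolynomial (Fin d) ℂ) (z : Fin d → ℂ) :
    Set (Fin d → ℂ) :=
  {v | ∀ i, ∑ j, v j * MvPolynomial.eval z (MvPolynomial.pderiv j (f i)) = 0}


variable {d}

/-- A compact toric complex-manifold compactification `K` of the torus `ℂ_*^d`,
containing `ℂ_*^d` as an open dense stratum (an orbit of the extended torus action),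
to which the monomial function `H(z) = z^m` extends as a smooth `ℙ¹`-valued function.
`ℙ¹` is modeled as the one-point compactification `OnePoint ℂ` of `ℂ`, and smoothness of
the extension means that near each point it is given either by a holomorphic function or
by the reciprocal of one. -/
structure SmoothCompactToricExtension (d : ℕ) (m : Fin d → ℤ) where
  K : Type
  [tK : TopologicalSpace K]
  [cK : ChartedSpace (EuclideanSpace ℂ (Fin d)) K]
  [sm : IsManifold (𝓘(ℂ, EuclideanSpace ℂ (Fin d))) (⊤ : ℕ∞) K]
  compact : CompactSpace K
  t2 : T2Space K
  /-- the embedding of the torus `ℂ_*^d` -/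
  emb : {z : Fin d → ℂ // z ∈ Cstar d} → K
  emb_open : IsOpenEmbedding emb
  emb_dense : Dense (Set.range emb)
  /-- the torus action on `K`, extending multiplication on `ℂ_*^d` -/
  act : {z : Fin d → ℂ // z ∈ Cstar d} → K → K
  act_cont : ∀ t, Continuous (act t)
  act_extends : ∀ t z : {z : Fin d → ℂ // z ∈ Cstar d},
    act t (emb z) = emb ⟨fun j => t.1 j * z.1 j,
      fun j => mul_ne_zero (t.2 j) (z.2 j)⟩
  /-- the extension of the monomial `z^m` -/
  H : K → OnePoint ℂ
  H_cont : Continuous H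
  H_extends : ∀ z : {z : Fin d → ℂ // z ∈ Cstar d},
    H (emb z) = ((∏ j, z.1 j ^ (m j) : ℂ) : OnePoint ℂ)
  H_smooth : ∀ x : K, ∃ U ∈ nhds x,
    (∃ f : K → ℂ,
      MDifferentiableOn (𝓘(ℂ, EuclideanSpace ℂ (Fin d))) (𝓘(ℂ, ℂ)) f U ∧
      ∀ y ∈ U, H y = (f y : OnePoint ℂ)) ∨
    (∃ f : K → ℂ,
      MDifferentiableOn (𝓘(ℂ, EuclideanSpace ℂ (Fin d))) (𝓘(ℂ, ℂ)) f U ∧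
      ∀ y ∈ U, H y = (if f y = 0 then OnePoint.infty else ((f y)⁻¹ : ℂ)))

end ACSV

/-!
By Smith normal form, a nonzero `m` is `n • Bᵢ` for a row `Bᵢ` of some `B ∈ GL_d(ℤ)` and some
`n : ℕ`. The monomial change of variables `z ↦ (z^{B₁}, …, z^{B_d})` is an automorphism of the torus
`ℂ_*^d`, and in the new variables `H` becomes `w ↦ wᵢ ^ n`. Embedding the torus into `(ℙ¹)^d`
through this change of variables, `H` therefore extends as `x ↦ xᵢ ^ n`, which in the standard
charts of `(ℙ¹)^d` (the affine coordinate `w` or `1/w` on each factor) is a power of a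
coordinate or the reciprocal of one.
-/

open Filter Topology Set OnePoint
open scoped Manifold

noncomputable section

namespace ACSV

section Sphere

def sphereInv (x : OnePoint ℂ) : OnePoint ℂ :=
  x.elim ((0 : ℂ) : OnePoint ℂ) fun w => if w = 0 then ∞ else ((w⁻¹ : ℂ) : OnePoint ℂ)

@[simp] lemma sphereInv_infty : sphereInv ∞ = ((0 : ℂ) : OnePoint ℂ) := rfl

@[simp] lemma sphereInv_zero : sphereInv ((0 : ℂ) : OnePoint ℂ) = ∞ := if_pos rfl

lemma sphereInv_coe_of_ne_zero {w : ℂ} (hw : w ≠ 0) :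
    sphereInv w = ((w⁻¹ : ℂ) : OnePoint ℂ) := if_neg hw

lemma sphereInv_involutive : Function.Involutive sphereInv := by
  intro x
  induction x using OnePoint.rec with
  | infty => exact sphereInv_zero
  | coe w =>
    by_cases hw : w = 0
    · simp [hw]
    · rw [sphereInv_coe_of_ne_zero hw, sphereInv_coe_of_ne_zero (inv_ne_zero hw), inv_inv]

lemma sphereInv_coe_eventuallyEq {l : Filter ℂ} (hl : ∀ᶠ w in l, w ≠ 0) :
    (fun w : ℂ => sphereInv w) =ᶠ[l] fun w => ((w⁻¹ : ℂ) : OnePoint ℂ) :=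
  hl.mono fun _ => sphereInv_coe_of_ne_zero

lemma continuous_sphereInv : Continuous sphereInv := by
  have hco : coclosedCompact ℂ = Bornology.cobounded ℂ := by
    rw [coclosedCompact_eq_cocompact, Metric.cobounded_eq_cocompact]
  rw [OnePoint.continuous_iff, hco]
  refine ⟨?_, continuous_iff_continuousAt.2 fun w => ?_⟩
  · exact ((continuous_coe.tendsto 0).comp tendsto_inv₀_cobounded).congr'
      (sphereInv_coe_eventuallyEq (Bornology.eventually_ne_cobounded 0)).symm
  by_cases hw : w = 0
  · subst hw
    rw [ContinuousAt, sphereInv_zero, ← nhdsNE_sup_pure, tendsto_sup]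
    refine ⟨?_, tendsto_pure_left.2 fun s hs => by simpa using mem_of_mem_nhds hs⟩
    exact ((hco ▸ tendsto_coe_infty).comp tendsto_inv₀_nhdsNE_zero).congr'
      (sphereInv_coe_eventuallyEq self_mem_nhdsWithin).symm
  · exact (continuous_coe.continuousAt.comp (continuousAt_inv₀ hw)).congr
      (sphereInv_coe_eventuallyEq (eventually_ne_nhds hw)).symm

lemma map_pow_sphereInv {n : ℕ} (hn : n ≠ 0) (w : ℂ) :
    OnePoint.map (· ^ n) (sphereInv w) = sphereInv ((w ^ n : ℂ) : OnePoint ℂ) := by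
  by_cases hw : w = 0
  · simp [hw, zero_pow hn]
  · simp [sphereInv_coe_of_ne_zero hw, sphereInv_coe_of_ne_zero (pow_ne_zero n hw), inv_pow]

end Sphere

section Charts

variable {ι : Type*}

def flipCoords (σ : ι → Bool) (x : ι → OnePoint ℂ) : ι → OnePoint ℂ :=
  fun j => if σ j then sphereInv (x j) else x j

lemma flipCoords_flipCoords (σ τ : ι → Bool) (x : ι → OnePoint ℂ) :
    flipCoords τ (flipCoords σ x) = flipCoords (fun j => xor (σ j) (τ j)) x := by
  funext j
  rcases hσ : σ j <;> rcases hτ : τ j <;> simp [flipCoords, hσ, hτ, sphereInv_involutive _]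

lemma flipCoords_involutive (σ : ι → Bool) : Function.Involutive (flipCoords σ) := fun x => by
  rw [flipCoords_flipCoords]
  funext j
  simp [flipCoords]

lemma continuous_flipCoords (σ : ι → Bool) : Continuous (flipCoords σ) :=
  continuous_pi fun j => by
    unfold flipCoords
    split_ifs
    exacts [continuous_sphereInv.comp (continuous_apply j), continuous_apply j]

def flipCoordsHomeomorph (σ : ι → Bool) : (ι → OnePoint ℂ) ≃ₜ (ι → OnePoint ℂ) where
  toFun := flipCoords σ
  invFun := flipCoords σ
  left_inv := flipCoords_involutive σ
  right_inv := flipCoords_involutive σ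
  continuous_toFun := continuous_flipCoords σ
  continuous_invFun := continuous_flipCoords σ

def sphereCoe (u : EuclideanSpace ℂ ι) : ι → OnePoint ℂ := fun j => (u j : OnePoint ℂ)

lemma mem_range_sphereCoe {x : ι → OnePoint ℂ} : x ∈ range sphereCoe ↔ ∀ j, x j ≠ ∞ := by
  refine ⟨?_, fun hx => ?_⟩
  · rintro ⟨u, rfl⟩ j
    exact coe_ne_infty _
  · choose w hw using fun j => OnePoint.ne_infty_iff_exists.1 (hx j)
    exact ⟨WithLp.toLp 2 w, funext hw⟩

def invertCoords (ρ : ι → Bool) (u : EuclideanSpace ℂ ι) : EuclideanSpace ℂ ι :=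
  WithLp.toLp 2 fun j => if ρ j then (u j)⁻¹ else u j

lemma flipCoords_sphereCoe {ρ : ι → Bool} {u : EuclideanSpace ℂ ι} (hu : ∀ j, ρ j → u j ≠ 0) :
    flipCoords ρ (sphereCoe u) = sphereCoe (invertCoords ρ u) := by
  funext j
  by_cases hj : ρ j
  · simp [flipCoords, sphereCoe, invertCoords, hj, sphereInv_coe_of_ne_zero (hu j hj)]
  · simp [flipCoords, sphereCoe, invertCoords, hj]

lemma ne_zero_of_flipCoords_sphereCoe_mem_range {ρ : ι → Bool} {u : EuclideanSpace ℂ ι}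
    (h : flipCoords ρ (sphereCoe u) ∈ range sphereCoe) (j : ι) (hj : ρ j) : u j ≠ 0 := by
  intro h0
  refine mem_range_sphereCoe.1 h j ?_
  simp [flipCoords, sphereCoe, hj, h0]

variable [Fintype ι]

lemma isOpenEmbedding_sphereCoe : IsOpenEmbedding (sphereCoe (ι := ι)) :=
  (IsOpenEmbedding.piMap fun _ => isOpenEmbedding_coe).comp
    (EuclideanSpace.equiv ι ℂ).toHomeomorph.isOpenEmbedding

lemma contDiffOn_invertCoords {n : WithTop ℕ∞} (ρ : ι → Bool) :
    ContDiffOn ℂ n (invertCoords ρ) {u | ∀ j, ρ j → u j ≠ 0} := by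
  refine contDiffOn_piLp' 2 fun j => ?_
  by_cases hj : ρ j
  · simp only [invertCoords, hj, if_true, PiLp.toLp_apply]
    exact (contDiffOn_piLp_apply 2).inv fun u hu => hu j hj
  · simpa [invertCoords, hj] using contDiffOn_piLp_apply 2

def sphereChart (σ : ι → Bool) : OpenPartialHomeomorph (ι → OnePoint ℂ) (EuclideanSpace ℂ ι) :=
  (flipCoordsHomeomorph σ).toOpenPartialHomeomorph.trans
    (isOpenEmbedding_sphereCoe.toOpenPartialHomeomorph sphereCoe).symm

lemma sphereChart_symm_apply (σ : ι → Bool) (u : EuclideanSpace ℂ ι) :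
    (sphereChart σ).symm u = flipCoords σ (sphereCoe u) := rfl

lemma sphereChart_source (σ : ι → Bool) :
    (sphereChart σ).source = flipCoords σ ⁻¹' range sphereCoe := by
  rw [sphereChart, OpenPartialHomeomorph.trans_source, Homeomorph.toOpenPartialHomeomorph_source,
    OpenPartialHomeomorph.symm_source, IsOpenEmbedding.toOpenPartialHomeomorph_target, univ_inter]
  rfl

lemma sphereChart_trans_source_subset (σ τ : ι → Bool) :
    ((sphereChart σ).symm ≫ₕ sphereChart τ).source ⊆
      {u | ∀ j, xor (σ j) (τ j) → u j ≠ 0} := by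
  intro u hu
  rw [OpenPartialHomeomorph.trans_source, mem_inter_iff, mem_preimage, sphereChart_source,
    mem_preimage, sphereChart_symm_apply, flipCoords_flipCoords] at hu
  exact ne_zero_of_flipCoords_sphereCoe_mem_range hu.2

lemma sphereChart_trans_eqOn (σ τ : ι → Bool) :
    EqOn ((sphereChart σ).symm ≫ₕ sphereChart τ) (invertCoords fun j => xor (σ j) (τ j))
      ((sphereChart σ).symm ≫ₕ sphereChart τ).source := by
  intro u hu
  change (isOpenEmbedding_sphereCoe.toOpenPartialHomeomorph sphereCoe).symm
    (flipCoords τ (flipCoords σ (sphereCoe u))) = _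
  rw [flipCoords_flipCoords, flipCoords_sphereCoe (sphereChart_trans_source_subset σ τ hu),
    IsOpenEmbedding.toOpenPartialHomeomorph_left_inv]

open Classical in
def infinityCoords (x : ι → OnePoint ℂ) : ι → Bool := fun j => decide (x j = ∞)

instance : ChartedSpace (EuclideanSpace ℂ ι) (ι → OnePoint ℂ) where
  atlas := range sphereChart
  chartAt x := sphereChart (infinityCoords x)
  mem_chart_source x := by
    rw [sphereChart_source, mem_preimage, mem_range_sphereCoe]
    intro j
    by_cases hj : x j = ∞ <;> simp [flipCoords, infinityCoords, hj]
  chart_mem_atlas _ := mem_range_self _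

instance {n : WithTop ℕ∞} : IsManifold 𝓘(ℂ, EuclideanSpace ℂ ι) n (ι → OnePoint ℂ) := by
  refine isManifold_of_contDiffOn _ _ _ ?_
  rintro _ _ ⟨σ, rfl⟩ ⟨τ, rfl⟩
  simp only [modelWithCornersSelf_coe, modelWithCornersSelf_coe_symm, range_id, inter_univ,
    preimage_id, CompTriple.comp_eq]
  exact ((contDiffOn_invertCoords _).mono (sphereChart_trans_source_subset σ τ)).congr
    (sphereChart_trans_eqOn σ τ)

end Charts

section SphereHolomorphic

variable {E H M : Type*} [NormedAddCommGroup E] [NormedSpace ℂ E] [TopologicalSpace H]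
  {I : ModelWithCorners ℂ E H} [TopologicalSpace M] [ChartedSpace H M]

variable (I) in
def IsSphereHolomorphic (g : M → OnePoint ℂ) : Prop :=
  ∀ x, ∃ U ∈ 𝓝 x,
    (∃ f : M → ℂ, MDifferentiableOn I 𝓘(ℂ, ℂ) f U ∧ ∀ y ∈ U, g y = f y) ∨
    (∃ f : M → ℂ, MDifferentiableOn I 𝓘(ℂ, ℂ) f U ∧ ∀ y ∈ U, g y = sphereInv (f y))

lemma IsSphereHolomorphic.continuous {g : M → OnePoint ℂ} (hg : IsSphereHolomorphic I g) :
    Continuous g := by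
  refine continuous_iff_continuousAt.2 fun x => ?_
  obtain ⟨U, hU, ⟨f, hf, hgf⟩ | ⟨f, hf, hgf⟩⟩ := hg x
  · exact (continuous_coe.continuousAt.comp (hf.continuousOn.continuousAt hU)).congr_of_eventuallyEq
      (eventually_of_mem hU hgf)
  · exact ((continuous_sphereInv.comp continuous_coe).continuousAt.comp
      (hf.continuousOn.continuousAt hU)).congr_of_eventuallyEq (eventually_of_mem hU hgf)

lemma isSphereHolomorphic_const (w : ℂ) : IsSphereHolomorphic I fun _ : M => (w : OnePoint ℂ) :=
  fun _ => ⟨univ, univ_mem, Or.inl ⟨fun _ => w, mdifferentiableOn_const, fun _ _ => rfl⟩⟩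

lemma IsSphereHolomorphic.map_pow {g : M → OnePoint ℂ} (hg : IsSphereHolomorphic I g) {n : ℕ}
    (hn : n ≠ 0) : IsSphereHolomorphic I fun x => OnePoint.map (· ^ n) (g x) := by
  intro x
  obtain ⟨U, hU, ⟨f, hf, hgf⟩ | ⟨f, hf, hgf⟩⟩ := hg x
  · exact ⟨U, hU, Or.inl ⟨f ^ n, hf.pow n, fun y hy => by simp only [hgf y hy]; rfl⟩⟩
  · exact ⟨U, hU, Or.inr ⟨f ^ n, hf.pow n, fun y hy => by
      simp only [hgf y hy, map_pow_sphereInv hn]; rfl⟩⟩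

lemma isSphereHolomorphic_apply {ι : Type*} [Fintype ι] (i : ι) :
    IsSphereHolomorphic 𝓘(ℂ, EuclideanSpace ℂ ι) fun x : ι → OnePoint ℂ => x i := by
  intro x
  set e := chartAt (EuclideanSpace ℂ ι) x
  have hf : MDifferentiableOn 𝓘(ℂ, EuclideanSpace ℂ ι) 𝓘(ℂ, ℂ) (fun y => e y i) e.source :=
    (EuclideanSpace.proj (𝕜 := ℂ) i).mdifferentiable.comp_mdifferentiableOn
      (mdifferentiable_chart (I := 𝓘(ℂ, EuclideanSpace ℂ ι)) x).1
  have he : ∀ y ∈ e.source, y i = flipCoords (infinityCoords x) (sphereCoe (e y)) i :=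
    fun y hy => congrFun (e.left_inv hy).symm i
  refine ⟨e.source, e.open_source.mem_nhds (mem_chart_source _ x), ?_⟩
  cases hx : infinityCoords x i
  · exact Or.inl ⟨_, hf, fun y hy => by simp [he y hy, flipCoords, sphereCoe, hx]⟩
  · exact Or.inr ⟨_, hf, fun y hy => by simp [he y hy, flipCoords, sphereCoe, hx]⟩

end SphereHolomorphic

lemma exists_basis_eq_smul {R M ι : Type*} [CommRing R] [IsDomain R] [IsPrincipalIdealRing R]
    [AddCommGroup M] [Module R M] [Finite ι] (b₀ : Module.Basis ι R M) {m : M} (hm : m ≠ 0) :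
    ∃ (b : Module.Basis ι R M) (i : ι) (c : R), m = c • b i := by
  have := Module.Free.of_basis b₀
  obtain ⟨n, b, bN, f, a, hsnf⟩ := Submodule.smithNormalForm b₀ (R ∙ m)
  have hn : n = 1 := by
    have h := (LinearEquiv.toSpanNonzeroSingleton R M m hm).finrank_eq
    rwa [Module.finrank_self, Module.finrank_eq_card_basis bN, Fintype.card_fin, eq_comm] at h
  subst hn
  set m' : R ∙ m := ⟨m, Submodule.mem_span_singleton_self m⟩
  have hm' : m' = bN.repr m' 0 • bN 0 := by simpa using (bN.sum_repr m').symm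
  refine ⟨b, f 0, bN.repr m' 0 * a 0, ?_⟩
  rw [mul_smul, ← hsnf 0]
  exact congrArg Subtype.val hm'

lemma exists_GL_row_eq_nsmul {ι : Type*} [Fintype ι] [DecidableEq ι] {m : ι → ℤ} (hm : m ≠ 0) :
    ∃ (B : GL ι ℤ) (i : ι) (n : ℕ), m = n • (B : Matrix ι ι ℤ) i := by
  obtain ⟨b, i, c, rfl⟩ := exists_basis_eq_smul (Pi.basisFun ℤ ι) hm
  let := (Pi.basisFun ℤ ι).invertibleToMatrix b
  set B := unitOfInvertible ((Pi.basisFun ℤ ι).toMatrix b).transpose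
  have hB : (B : Matrix ι ι ℤ) i = b i := by
    ext j
    simp [B, Module.Basis.toMatrix_apply]
  rcases le_or_gt 0 c with hc | hc
  · refine ⟨B, i, c.natAbs, ?_⟩
    rw [hB, ← natCast_zsmul, Int.natAbs_of_nonneg hc]
  · refine ⟨-B, i, c.natAbs, ?_⟩
    change _ = c.natAbs • -(B : Matrix ι ι ℤ) i
    rw [hB, smul_neg, ← natCast_zsmul, ← neg_smul, Int.ofNat_natAbs_of_nonpos hc.le, neg_neg]

section Monomial

variable {ι G₀ : Type*} [Fintype ι] [CommGroupWithZero G₀]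

lemma zpow_sum₀ {κ : Type*} {a : G₀} (ha : a ≠ 0) (s : Finset κ) (f : κ → ℤ) :
    a ^ (∑ k ∈ s, f k) = ∏ k ∈ s, a ^ f k := by
  induction s using Finset.cons_induction with
  | empty => simp
  | cons k s hk ih => rw [Finset.sum_cons, Finset.prod_cons, zpow_add₀ ha, ih]

def laurentMonomial (e : ι → ℤ) (z : ι → G₀) : G₀ := ∏ j, z j ^ e j

lemma laurentMonomial_ne_zero (e : ι → ℤ) {z : ι → G₀} (hz : ∀ j, z j ≠ 0) :
    laurentMonomial e z ≠ 0 :=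
  Finset.prod_ne_zero_iff.2 fun j _ => zpow_ne_zero _ (hz j)

lemma laurentMonomial_mul (e : ι → ℤ) (s z : ι → G₀) :
    laurentMonomial e (s * z) = laurentMonomial e s * laurentMonomial e z := by
  simp only [laurentMonomial, Pi.mul_apply, mul_zpow, Finset.prod_mul_distrib]

lemma laurentMonomial_nsmul (n : ℕ) (e : ι → ℤ) (z : ι → G₀) :
    laurentMonomial (n • e) z = laurentMonomial e z ^ n := by
  simp only [laurentMonomial, ← Finset.prod_pow, Pi.smul_apply, nsmul_eq_mul, mul_comm (n : ℤ),
    zpow_mul, zpow_natCast]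

def monomialMap (A : Matrix ι ι ℤ) (z : ι → G₀) : ι → G₀ := fun i => laurentMonomial (A i) z

lemma monomialMap_monomialMap (A B : Matrix ι ι ℤ) {z : ι → G₀} (hz : ∀ j, z j ≠ 0) :
    monomialMap A (monomialMap B z) = monomialMap (A * B) z := by
  funext i
  calc ∏ k, (∏ j, z j ^ B k j) ^ A i k = ∏ k, ∏ j, z j ^ (A i k * B k j) := by
        simp only [← Finset.prod_zpow, ← zpow_mul, mul_comm (A i _)]
    _ = ∏ j, ∏ k, z j ^ (A i k * B k j) := Finset.prod_comm
    _ = ∏ j, z j ^ (A * B) i j := by simp only [Matrix.mul_apply, zpow_sum₀ (hz _)]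

lemma monomialMap_one [DecidableEq ι] (z : ι → G₀) : monomialMap 1 z = z := by
  funext i
  simp [monomialMap, laurentMonomial, Matrix.one_apply]

end Monomial

section Torus

variable {d : ℕ}

lemma mem_Cstar {z : Fin d → ℂ} : z ∈ Cstar d ↔ ∀ j, z j ≠ 0 := Iff.rfl

lemma isOpen_Cstar : IsOpen (Cstar d) := by
  simp only [Cstar, ofPred_forall]
  exact isOpen_iInter_of_finite fun j => isOpen_ne_fun (continuous_apply j) continuous_const

lemma continuous_monomialMap (A : Matrix (Fin d) (Fin d) ℤ) :
    Continuous fun z : Cstar d => monomialMap A z.1 := by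
  unfold monomialMap laurentMonomial
  exact continuous_pi fun _ => continuous_finsetProd _ fun j _ =>
    ((continuous_apply j).comp continuous_subtype_val).zpow₀ _ fun z => Or.inl (mem_Cstar.1 z.2 j)

def monomialHomeomorph (B : GL (Fin d) ℤ) : Cstar d ≃ₜ Cstar d where
  toFun z := ⟨monomialMap (B : Matrix (Fin d) (Fin d) ℤ) z.1,
    fun _ => laurentMonomial_ne_zero _ z.2⟩
  invFun z := ⟨monomialMap (↑B⁻¹ : Matrix (Fin d) (Fin d) ℤ) z.1,
    fun _ => laurentMonomial_ne_zero _ z.2⟩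
  left_inv z := Subtype.ext <| by
    dsimp only
    rw [monomialMap_monomialMap _ _ z.2, B.inv_mul, monomialMap_one]
  right_inv z := Subtype.ext <| by
    dsimp only
    rw [monomialMap_monomialMap _ _ z.2, B.mul_inv, monomialMap_one]
  continuous_toFun := (continuous_monomialMap _).subtype_mk _
  continuous_invFun := (continuous_monomialMap _).subtype_mk _

def torusCoe (z : Cstar d) : Fin d → OnePoint ℂ := fun j => (z.1 j : OnePoint ℂ)

lemma isOpenEmbedding_torusCoe : IsOpenEmbedding (torusCoe (d := d)) :=
  (IsOpenEmbedding.piMap fun _ => isOpenEmbedding_coe).comp isOpen_Cstar.isOpenEmbedding_subtypeVal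

lemma denseRange_torusCoe : DenseRange (torusCoe (d := d)) := by
  have hrange : range (torusCoe (d := d)) =
      univ.pi fun _ => range ((↑) : ℂ → OnePoint ℂ) \ {((0 : ℂ) : OnePoint ℂ)} := by
    ext x
    refine ⟨?_, fun hx => ?_⟩
    · rintro ⟨z, rfl⟩ j -
      exact ⟨mem_range_self _, by simpa [torusCoe] using z.2 j⟩
    · choose w hw using fun j => (hx j trivial).1
      exact ⟨⟨w, fun j h0 => (hx j trivial).2 (by simp [← hw j, h0])⟩, funext hw⟩
  rw [DenseRange, hrange]
  exact dense_pi _ fun _ _ => denseRange_coe.sdiff_singleton _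

end Torus

def SmoothCompactToricExtension.ofMonomialChange {d : ℕ} {m : Fin d → ℤ} (B : GL (Fin d) ℤ)
    (H : (Fin d → OnePoint ℂ) → OnePoint ℂ)
    (hH : IsSphereHolomorphic 𝓘(ℂ, EuclideanSpace ℂ (Fin d)) H)
    (hext : ∀ z, H (torusCoe (monomialHomeomorph B z)) = ((∏ j, z.1 j ^ m j : ℂ) : OnePoint ℂ)) :
    SmoothCompactToricExtension d m where
  K := Fin d → OnePoint ℂ
  compact := inferInstance
  t2 := inferInstance
  emb := torusCoe ∘ monomialHomeomorph B
  emb_open := isOpenEmbedding_torusCoe.comp (monomialHomeomorph B).isOpenEmbedding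
  emb_dense := by
    rw [(monomialHomeomorph B).surjective.range_comp]
    exact denseRange_torusCoe
  act t x i := OnePoint.map (monomialMap (B : Matrix (Fin d) (Fin d) ℤ) t.1 i * ·) (x i)
  act_cont t := continuous_pi fun i =>
    (Homeomorph.mulLeft₀ _ (laurentMonomial_ne_zero _ t.2)).onePointCongr.continuous.comp
      (continuous_apply i)
  act_extends t z := funext fun i =>
    congrArg ((↑) : ℂ → OnePoint ℂ) (laurentMonomial_mul _ t.1 z.1).symm
  H := H
  H_cont := hH.continuous
  H_extends := hext
  -- `sphereInv ↑w` unfolds to the field's `if w = 0 then ∞ else ↑w⁻¹`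
  H_smooth := hH

end ACSV

end

open ACSV in
/-- Let `H(z) = z^m` be a monomial function on `ℂ_*^d` (`m ∈ ℤ^d`).
Then there exists a compact toric manifold `K` such that `ℂ_*^d` embeds into `K` as an
open dense stratum and the function `H` extends from this stratum to a smooth
`ℙ¹`-valued function on all of `K`. -/
theorem monomial_extends_to_compact_toric_manifold (d : ℕ) (m : Fin d → ℤ) :
    Nonempty (SmoothCompactToricExtension d m) := by
  by_cases hm : m = 0
  · subst hm
    exact ⟨.ofMonomialChange 1 (fun _ => ((1 : ℂ) : OnePoint ℂ)) (isSphereHolomorphic_const 1)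
      fun z => by simp⟩
  obtain ⟨B, i, n, rfl⟩ := exists_GL_row_eq_nsmul hm
  have hn : n ≠ 0 := by
    rintro rfl
    simp at hm
  exact ⟨.ofMonomialChange B (fun x => OnePoint.map (· ^ n) (x i))
    ((isSphereHolomorphic_apply i).map_pow hn)
    fun z => congrArg ((↑) : ℂ → OnePoint ℂ) (laurentMonomial_nsmul n _ z.1).symm⟩
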